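/- Let c, p, k > 0, α, β ∈ (0,1) with α + β = 1, and x, y > 0. Then the extended Chaudhry-Zubair gamma function satisfies Γ_{CZ:(c,p,k)}(x + y) ≤ [Γ_{CZ:(c,p,k)}(x/α)]^α · [Γ_{CZ:(c,p,k)}(y/β)]^β. -/

import Mathlib

/-!
For `t > 0` the integrand at `a * u + b * v` (with `a + b = 1`) is the weighted geometric mean
`f_u(t) ^ a * f_v(t) ^ b` of the integrands at `u` and `v`, so Hölder's inequality with exponents
`1/a, 1/b` makes `czGamma c p k` log-convex on `(0, ∞)`. The theorem is the instance
`x + y = α * (x / α) + β * (y / β)`. The integrals converge because the integrand is dominated by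
`t ^ (x - 1) * exp (-t ^ k / p)`.
-/

open MeasureTheory Real

noncomputable def czGamma (c p k : ℝ) (x : ℝ) : ℝ :=
  ∫ t in Set.Ioi (0:ℝ), t ^ (x - 1) * Real.exp (-(t ^ k) / p - c * p / t ^ k)

theorem integral_rpow_mul_rpow_le {α : Type*} [MeasurableSpace α] {μ : Measure α}
    {f g : α → ℝ} (hf₀ : 0 ≤ᵐ[μ] f) (hg₀ : 0 ≤ᵐ[μ] g) (hf : Integrable f μ) (hg : Integrable g μ)
    {a b : ℝ} (ha : 0 ≤ a) (hb : 0 ≤ b) (hab : a + b = 1) :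
    ∫ x, f x ^ a * g x ^ b ∂μ ≤ (∫ x, f x ∂μ) ^ a * (∫ x, g x ∂μ) ^ b := by
  have hfg₀ : 0 ≤ᵐ[μ] fun x ↦ f x ^ a * g x ^ b := by
    filter_upwards [hf₀, hg₀] with x hfx hgx
    exact mul_nonneg (rpow_nonneg hfx a) (rpow_nonneg hgx b)
  have hfg : AEStronglyMeasurable (fun x ↦ f x ^ a * g x ^ b) μ :=
    ((hf.aemeasurable.pow_const a).mul (hg.aemeasurable.pow_const b)).aestronglyMeasurable
  have hofReal : (fun x ↦ ENNReal.ofReal (f x ^ a * g x ^ b)) =ᵐ[μ]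
      fun x ↦ ENNReal.ofReal (f x) ^ a * ENNReal.ofReal (g x) ^ b := by
    filter_upwards [hf₀, hg₀] with x hfx hgx
    rw [ENNReal.ofReal_mul (rpow_nonneg hfx a), ENNReal.ofReal_rpow_of_nonneg hfx ha,
      ENNReal.ofReal_rpow_of_nonneg hgx hb]
  have holder := ENNReal.lintegral_mul_norm_pow_le hf.aemeasurable.ennreal_ofReal
    hg.aemeasurable.ennreal_ofReal ha hb hab
  rw [integral_eq_lintegral_of_nonneg_ae hfg₀ hfg, integral_eq_lintegral_of_nonneg_ae hf₀ hf.1,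
    integral_eq_lintegral_of_nonneg_ae hg₀ hg.1, ENNReal.toReal_rpow, ENNReal.toReal_rpow,
    ← ENNReal.toReal_mul, lintegral_congr_ae hofReal]
  refine ENNReal.toReal_mono (ENNReal.mul_ne_top ?_ ?_) holder
  · exact ENNReal.rpow_ne_top_of_nonneg ha hf.lintegral_lt_top.ne
  · exact ENNReal.rpow_ne_top_of_nonneg hb hg.lintegral_lt_top.ne

noncomputable def czIntegrand (c p k x t : ℝ) : ℝ :=
  t ^ (x - 1) * exp (-(t ^ k) / p - c * p / t ^ k)

theorem czGamma_eq (c p k x : ℝ) :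
    czGamma c p k x = ∫ t in Set.Ioi 0, czIntegrand c p k x t := rfl

theorem czIntegrand_nonneg (c p k x : ℝ) {t : ℝ} (ht : 0 ≤ t) : 0 ≤ czIntegrand c p k x t := by
  unfold czIntegrand
  positivity

theorem measurable_czIntegrand (c p k x : ℝ) : Measurable (czIntegrand c p k x) := by
  unfold czIntegrand
  fun_prop

theorem czIntegrand_le {c p k : ℝ} (hc : 0 ≤ c) (hp : 0 < p) (x : ℝ) {t : ℝ} (ht : 0 < t) :
    czIntegrand c p k x t ≤ t ^ (x - 1) * exp (-p⁻¹ * t ^ k) := by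
  have : 0 ≤ c * p / t ^ k := by positivity
  unfold czIntegrand
  gcongr
  linarith [div_eq_inv_mul (-(t ^ k)) p]

theorem integrableOn_czIntegrand {c p k x : ℝ} (hc : 0 ≤ c) (hp : 0 < p) (hk : 0 < k)
    (hx : 0 < x) : IntegrableOn (czIntegrand c p k x) (Set.Ioi 0) := by
  have hmajorant := integrableOn_rpow_mul_exp_neg_mul_rpow (s := x - 1) (by linarith) hk
    (inv_pos.mpr hp)
  refine hmajorant.mono' (measurable_czIntegrand c p k x).aestronglyMeasurable ?_
  filter_upwards [ae_restrict_mem measurableSet_Ioi] with t (ht : 0 < t)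
  rw [norm_of_nonneg (czIntegrand_nonneg c p k x ht.le)]
  exact czIntegrand_le hc hp x ht

theorem czIntegrand_mul_add_mul (c p k : ℝ) {a b : ℝ} (hab : a + b = 1) (u v : ℝ) {t : ℝ}
    (ht : 0 < t) :
    czIntegrand c p k (a * u + b * v) t =
      czIntegrand c p k u t ^ a * czIntegrand c p k v t ^ b := by
  unfold czIntegrand
  rw [mul_rpow (by positivity) (by positivity), mul_rpow (by positivity) (by positivity),
    ← rpow_mul ht.le, ← rpow_mul ht.le, ← exp_mul, ← exp_mul, mul_mul_mul_comm, ← rpow_add ht,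
    ← exp_add]
  congr 2
  · linear_combination hab
  · linear_combination -(-(t ^ k) / p - c * p / t ^ k) * hab

theorem czGamma_mul_add_mul_le {c p k : ℝ} (hc : 0 ≤ c) (hp : 0 < p) (hk : 0 < k)
    {a b : ℝ} (ha : 0 ≤ a) (hb : 0 ≤ b) (hab : a + b = 1) {u v : ℝ} (hu : 0 < u) (hv : 0 < v) :
    czGamma c p k (a * u + b * v) ≤ czGamma c p k u ^ a * czGamma c p k v ^ b := by
  have hnonneg (x : ℝ) : 0 ≤ᵐ[volume.restrict (Set.Ioi 0)] czIntegrand c p k x := by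
    filter_upwards [ae_restrict_mem measurableSet_Ioi] with t (ht : 0 < t)
    exact czIntegrand_nonneg c p k x ht.le
  rw [czGamma_eq, czGamma_eq, czGamma_eq, setIntegral_congr_fun measurableSet_Ioi
    fun t ht ↦ czIntegrand_mul_add_mul c p k hab u v ht]
  exact integral_rpow_mul_rpow_le (hnonneg u) (hnonneg v) (integrableOn_czIntegrand hc hp hk hu)
    (integrableOn_czIntegrand hc hp hk hv) ha hb hab

theorem czGamma_superadditive_ineq (c p k α β : ℝ) (hc : 0 < c) (hp : 0 < p)
    (hk : 0 < k) (hα : α ∈ Set.Ioo (0:ℝ) 1) (hβ : β ∈ Set.Ioo (0:ℝ) 1)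
    (hαβ : α + β = 1) (x y : ℝ) (hx : 0 < x) (hy : 0 < y) :
    czGamma c p k (x + y) ≤
      czGamma c p k (x / α) ^ α * czGamma c p k (y / β) ^ β := by
  have hxy : x + y = α * (x / α) + β * (y / β) := by
    rw [mul_div_cancel₀ x hα.1.ne', mul_div_cancel₀ y hβ.1.ne']
  rw [hxy]
  exact czGamma_mul_add_mul_le hc.le hp hk hα.1.le hβ.1.le hαβ (div_pos hx hα.1)
    (div_pos hy hβ.1)
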